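/- arXiv:2509.22798 — 3 statements merged into one kernel-verified Lean document; each statement's English description precedes it below -/
import Mathlib

section
/- Let φ ∈ (0,1), θ ∈ (0,1), and λ > 0. Let W be Bernoulli with P(W = 1) = 1 − φ, let Y₁, Y₂ ~ Poisson((1 − θ)λ) and Z ~ Poisson(θλ), with W, Y₁, Y₂, Z mutually independent. Set X₁ = W(Y₁ + Z) and X₂ = W(Y₂ + Z). Then corr(X₁, X₂) = (θ + φλ)/(1 + φλ). -/
/-!
Write `Sᵢ = Yᵢ + Z` and `p = E W = 1 - φ`. Since `W² = W` and `W` is independent of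
`(S₁, S₂)`, `cov(W S₁, W S₂) = p cov(S₁, S₂) + p (1 - p) E S₁ E S₂` and
`var(W Sᵢ) = p var Sᵢ + p (1 - p) (E Sᵢ)²`; the factor `p` cancels in the correlation.
Each `Sᵢ` is Poisson(λ), so `E Sᵢ = var Sᵢ = λ`, and the common shock gives
`cov(S₁, S₂) = var Z = θλ`. Hence `corr(X₁, X₂) = (θλ + φλ²) / (λ + φλ²)`.
-/

open MeasureTheory ProbabilityTheory

namespace ProbabilityTheory

open Real
open scoped NNReal ENNReal Nat

lemma poissonMeasure_succ_mul (r : ℝ≥0) (n : ℕ) :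
    exp (-r) * r ^ (n + 1) / (n + 1)! * (n + 1 : ℕ) = r * (exp (-r) * r ^ n / n !) := by
  rw [Nat.factorial_succ]
  push_cast
  field_simp
  ring

/-- Stein's identity for the Poisson distribution: `E[N g(N)] = r E[g(N + 1)]`. -/
lemma hasSum_poissonMeasure_natCast_mul {r : ℝ≥0} {g : ℕ → ℝ} {a : ℝ}
    (h : HasSum (fun n ↦ exp (-r) * r ^ n / n ! * g (n + 1)) a) :
    HasSum (fun n : ℕ ↦ exp (-r) * r ^ n / n ! * (n * g n)) (r * a) := by
  refine (hasSum_nat_add_iff' 1).mp ?_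
  simp only [Finset.sum_range_one, Nat.cast_zero, zero_mul, mul_zero, sub_zero]
  refine (h.mul_left (r : ℝ)).congr_fun fun n ↦ ?_
  rw [← mul_assoc, poissonMeasure_succ_mul]
  ring

lemma hasSum_poissonMeasure_natCast (r : ℝ≥0) :
    HasSum (fun n : ℕ ↦ exp (-r) * r ^ n / n ! * n) r := by
  have h := hasSum_poissonMeasure_natCast_mul (r := r) (g := fun _ ↦ 1)
    (by simpa using hasSum_one_poissonMeasure r)
  simpa using h

lemma hasSum_poissonMeasure_natCast_sq (r : ℝ≥0) :
    HasSum (fun n : ℕ ↦ exp (-r) * r ^ n / n ! * (n : ℝ) ^ 2) (r ^ 2 + r) := by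
  have h := hasSum_poissonMeasure_natCast_mul (r := r) (g := fun n ↦ (n : ℝ))
    (((hasSum_poissonMeasure_natCast r).add (hasSum_one_poissonMeasure r)).congr_fun
      fun n ↦ by push_cast; ring)
  convert h using 1
  · ext n; ring
  · ring

noncomputable def correlation {Ω : Type*} {mΩ : MeasurableSpace Ω} (X Y : Ω → ℝ)
    (μ : Measure Ω) : ℝ :=
  (μ[X * Y] - μ[X] * μ[Y]) / √(Var[X; μ] * Var[Y; μ])

variable {Ω : Type*} {mΩ : MeasurableSpace Ω} {μ : Measure Ω}

section PoissonMoments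

lemma hasLaw_poissonMeasure_of_measure_eq {N : Ω → ℕ} (hN : Measurable N) (r : ℝ≥0)
    (h : ∀ k : ℕ, μ {ω | N ω = k} = ENNReal.ofReal (exp (-r) * r ^ k / k !)) :
    HasLaw N (poissonMeasure r) μ where
  aemeasurable := hN.aemeasurable
  map_eq := Measure.ext_iff_singleton.mpr fun k ↦ by
    rw [Measure.map_apply hN (measurableSet_singleton k), poissonMeasure_singleton]
    exact h k

variable {N : Ω → ℕ} {r : ℝ≥0}

lemma HasLaw.memLp_natCast_poissonMeasure (hN : HasLaw N (poissonMeasure r) μ) :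
    MemLp (fun ω ↦ (N ω : ℝ)) 2 μ := by
  have hsq : Integrable (fun n : ℕ ↦ (n : ℝ) ^ 2) (poissonMeasure r) :=
    integrable_poissonMeasure_iff.2 (by simpa using (hasSum_poissonMeasure_natCast_sq r).summable)
  refine (memLp_two_iff_integrable_sq ?_).2 ?_
  · exact ((measurable_of_countable _).comp_aemeasurable hN.aemeasurable).aestronglyMeasurable
  · exact (hN.map_eq ▸ hsq).comp_aemeasurable hN.aemeasurable

lemma HasLaw.integral_natCast_poissonMeasure (hN : HasLaw N (poissonMeasure r) μ) :
    μ[fun ω ↦ (N ω : ℝ)] = (r : ℝ) := by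
  refine (hN.integral_comp (f := fun n : ℕ ↦ (n : ℝ)) .of_discrete).trans ?_
  simpa [integral_poissonMeasure] using (hasSum_poissonMeasure_natCast r).tsum_eq

lemma HasLaw.variance_natCast_poissonMeasure (hN : HasLaw N (poissonMeasure r) μ) :
    Var[fun ω ↦ (N ω : ℝ); μ] = (r : ℝ) := by
  have := hN.isProbabilityMeasure
  have hsq : μ[fun ω ↦ (N ω : ℝ) ^ 2] = (r : ℝ) ^ 2 + r := by
    refine (hN.integral_comp (f := fun n : ℕ ↦ (n : ℝ) ^ 2) .of_discrete).trans ?_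
    simpa [integral_poissonMeasure] using (hasSum_poissonMeasure_natCast_sq r).tsum_eq
  rw [variance_eq_sub hN.memLp_natCast_poissonMeasure, hN.integral_natCast_poissonMeasure]
  simp only [Pi.pow_apply, hsq]
  ring

end PoissonMoments

section ZeroInflation

variable {W U V : Ω → ℝ}

lemma integral_eq_measureReal_of_forall_eq_zero_or_one (hW : ∀ ω, W ω = 0 ∨ W ω = 1)
    (hWm : MeasurableSet {ω | W ω = 1}) : μ[W] = μ.real {ω | W ω = 1} := by
  have hW_eq : W = {ω | W ω = 1}.indicator 1 := by
    ext ω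
    rcases hW ω with h | h <;> simp [Set.indicator, h]
  calc μ[W] = μ[{ω | W ω = 1}.indicator 1] := congrArg (fun f ↦ μ[f]) hW_eq
    _ = μ.real {ω | W ω = 1} := integral_indicator_one hWm

lemma _root_.MeasureTheory.MemLp.mul_of_forall_eq_zero_or_one {p : ℝ≥0∞} (hU : MemLp U p μ)
    (hW : ∀ ω, W ω = 0 ∨ W ω = 1) (hWm : AEStronglyMeasurable W μ) :
    MemLp (fun ω ↦ W ω * U ω) p μ :=
  hU.mono (hWm.mul hU.aestronglyMeasurable) <| ae_of_all _ fun ω ↦ by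
    rcases hW ω with h | h <;> simp [h]

variable [IsProbabilityMeasure μ]

lemma covariance_mul_mul_of_indepFun (hW : ∀ ω, W ω = 0 ∨ W ω = 1)
    (hWm : AEStronglyMeasurable W μ) (hU : MemLp U 2 μ) (hV : MemLp V 2 μ)
    (hind : IndepFun W (fun ω ↦ (U ω, V ω)) μ) :
    cov[fun ω ↦ W ω * U ω, fun ω ↦ W ω * V ω; μ]
      = μ[W] * cov[U, V; μ] + μ[W] * (1 - μ[W]) * μ[U] * μ[V] := by
  have hWU : IndepFun W U μ := hind.comp measurable_id measurable_fst
  have hWV : IndepFun W V μ := hind.comp measurable_id measurable_snd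
  have hWUV : IndepFun W (U * V) μ := hind.comp measurable_id (measurable_fst.mul measurable_snd)
  have hsq : (fun ω ↦ W ω * U ω) * (fun ω ↦ W ω * V ω) = W * (U * V) := by
    ext ω
    rcases hW ω with h | h <;> simp [h]
  rw [covariance_eq_sub (hU.mul_of_forall_eq_zero_or_one hW hWm)
      (hV.mul_of_forall_eq_zero_or_one hW hWm), covariance_eq_sub hU hV, hsq,
    hWUV.integral_mul_eq_mul_integral hWm (hU.aestronglyMeasurable.mul hV.aestronglyMeasurable),
    hWU.integral_fun_mul_eq_mul_integral hWm hU.aestronglyMeasurable,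
    hWV.integral_fun_mul_eq_mul_integral hWm hV.aestronglyMeasurable]
  ring

lemma variance_mul_of_indepFun (hW : ∀ ω, W ω = 0 ∨ W ω = 1)
    (hWm : AEStronglyMeasurable W μ) (hU : MemLp U 2 μ) (hind : IndepFun W U μ) :
    Var[fun ω ↦ W ω * U ω; μ] = μ[W] * Var[U; μ] + μ[W] * (1 - μ[W]) * μ[U] ^ 2 := by
  have h := covariance_mul_mul_of_indepFun hW hWm hU hU
    (hind.comp measurable_id (measurable_id.prodMk measurable_id))
  rw [← covariance_self (hU.mul_of_forall_eq_zero_or_one hW hWm).aemeasurable, h,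
    covariance_self hU.aemeasurable]
  ring

lemma correlation_mul_of_indepFun (hW : ∀ ω, W ω = 0 ∨ W ω = 1)
    (hWm : AEStronglyMeasurable W μ) (hp : μ[W] ≠ 0) (hU : MemLp U 2 μ) (hV : MemLp V 2 μ)
    (hind : IndepFun W (fun ω ↦ (U ω, V ω)) μ) (hmean : μ[V] = μ[U])
    (hvar : Var[V; μ] = Var[U; μ]) :
    correlation (fun ω ↦ W ω * U ω) (fun ω ↦ W ω * V ω) μ
      = (cov[U, V; μ] + (1 - μ[W]) * μ[U] ^ 2) / (Var[U; μ] + (1 - μ[W]) * μ[U] ^ 2) := by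
  have hvarU := variance_mul_of_indepFun hW hWm hU (hind.comp measurable_id measurable_fst)
  have hvarV := variance_mul_of_indepFun hW hWm hV (hind.comp measurable_id measurable_snd)
  rw [correlation, ← covariance_eq_sub (hU.mul_of_forall_eq_zero_or_one hW hWm)
      (hV.mul_of_forall_eq_zero_or_one hW hWm), hvarV, hmean, hvar, ← hvarU,
    Real.sqrt_mul_self (variance_nonneg _ _), hvarU,
    covariance_mul_mul_of_indepFun hW hWm hU hV hind, hmean]
  rw [show μ[W] * cov[U, V; μ] + μ[W] * (1 - μ[W]) * μ[U] * μ[U]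
      = μ[W] * (cov[U, V; μ] + (1 - μ[W]) * μ[U] ^ 2) by ring,
    show μ[W] * Var[U; μ] + μ[W] * (1 - μ[W]) * μ[U] ^ 2
      = μ[W] * (Var[U; μ] + (1 - μ[W]) * μ[U] ^ 2) by ring, mul_div_mul_left _ _ hp]

end ZeroInflation

lemma covariance_add_add_of_indepFun [IsFiniteMeasure μ] {X Y Z : Ω → ℝ} (hX : MemLp X 2 μ)
    (hY : MemLp Y 2 μ) (hZ : MemLp Z 2 μ)
    (hXY : IndepFun X Y μ) (hXZ : IndepFun X Z μ) (hYZ : IndepFun Y Z μ) :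
    cov[X + Z, Y + Z; μ] = Var[Z; μ] := by
  rw [covariance_add_left hX hZ (hY.add hZ), covariance_add_right hX hY hZ,
    covariance_add_right hZ hY hZ, hXY.covariance_eq_zero hX hY, hXZ.covariance_eq_zero hX hZ,
    hYZ.symm.covariance_eq_zero hZ hY, covariance_self hZ.aemeasurable]
  ring

lemma covariance_natCast_add_add_poissonMeasure {Y₁ Y₂ Z : Ω → ℕ} {r₁ r₂ r₀ : ℝ≥0}
    (hY₁ : HasLaw Y₁ (poissonMeasure r₁) μ) (hY₂ : HasLaw Y₂ (poissonMeasure r₂) μ)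
    (hZ : HasLaw Z (poissonMeasure r₀) μ)
    (hY₁Y₂ : IndepFun Y₁ Y₂ μ) (hY₁Z : IndepFun Y₁ Z μ) (hY₂Z : IndepFun Y₂ Z μ) :
    cov[fun ω ↦ ((Y₁ ω + Z ω : ℕ) : ℝ), fun ω ↦ ((Y₂ ω + Z ω : ℕ) : ℝ); μ] = r₀ := by
  have := hZ.isProbabilityMeasure
  have hcast : Measurable (fun n : ℕ ↦ (n : ℝ)) := measurable_of_countable _
  push_cast
  exact (covariance_add_add_of_indepFun hY₁.memLp_natCast_poissonMeasure
    hY₂.memLp_natCast_poissonMeasure hZ.memLp_natCast_poissonMeasure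
    (hY₁Y₂.comp hcast hcast) (hY₁Z.comp hcast hcast) (hY₂Z.comp hcast hcast)).trans
    hZ.variance_natCast_poissonMeasure

lemma correlation_zeroInflated_commonShock [IsProbabilityMeasure μ] {W Y₁ Y₂ Z : Ω → ℕ}
    {r₁ r₀ : ℝ≥0} (hWm : Measurable W) (hW : ∀ ω, W ω = 0 ∨ W ω = 1) (hp : μ[fun ω ↦ (W ω : ℝ)] ≠ 0)
    (hY₁ : HasLaw Y₁ (poissonMeasure r₁) μ) (hY₂ : HasLaw Y₂ (poissonMeasure r₁) μ)
    (hZ : HasLaw Z (poissonMeasure r₀) μ) (hind₁ : IndepFun W (fun ω ↦ (Y₁ ω, Y₂ ω, Z ω)) μ)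
    (hind₂ : IndepFun Y₁ (fun ω ↦ (Y₂ ω, Z ω)) μ) (hind₃ : IndepFun Y₂ Z μ) :
    correlation (fun ω ↦ (W ω : ℝ) * ((Y₁ ω + Z ω : ℕ) : ℝ))
        (fun ω ↦ (W ω : ℝ) * ((Y₂ ω + Z ω : ℕ) : ℝ)) μ
      = (r₀ + (1 - μ[fun ω ↦ (W ω : ℝ)]) * (r₁ + r₀ : ℝ≥0) ^ 2)
        / ((r₁ + r₀ : ℝ≥0) + (1 - μ[fun ω ↦ (W ω : ℝ)]) * (r₁ + r₀ : ℝ≥0) ^ 2) := by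
  have hY₁Z : IndepFun Y₁ Z μ := hind₂.comp measurable_id measurable_snd
  have hS₁ : HasLaw (fun ω ↦ Y₁ ω + Z ω) (poissonMeasure (r₁ + r₀)) μ :=
    hY₁Z.hasLaw_add_poissonMeasure hY₁ hZ
  have hS₂ : HasLaw (fun ω ↦ Y₂ ω + Z ω) (poissonMeasure (r₁ + r₀)) μ :=
    hind₃.hasLaw_add_poissonMeasure hY₂ hZ
  have hind : IndepFun (fun ω ↦ (W ω : ℝ))
      (fun ω ↦ (((Y₁ ω + Z ω : ℕ) : ℝ), ((Y₂ ω + Z ω : ℕ) : ℝ))) μ :=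
    hind₁.comp (measurable_of_countable fun n : ℕ ↦ (n : ℝ))
      (measurable_of_countable fun p : ℕ × ℕ × ℕ ↦
        (((p.1 + p.2.2 : ℕ) : ℝ), ((p.2.1 + p.2.2 : ℕ) : ℝ)))
  have hWm' : Measurable (fun ω ↦ (W ω : ℝ)) := (measurable_of_countable _).comp hWm
  rw [correlation_mul_of_indepFun (by simpa using hW) hWm'.aestronglyMeasurable hp
      hS₁.memLp_natCast_poissonMeasure hS₂.memLp_natCast_poissonMeasure hind
      (by rw [hS₁.integral_natCast_poissonMeasure, hS₂.integral_natCast_poissonMeasure])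
      (by rw [hS₁.variance_natCast_poissonMeasure, hS₂.variance_natCast_poissonMeasure]),
    covariance_natCast_add_add_poissonMeasure hY₁ hY₂ hZ
      (hind₂.comp measurable_id measurable_fst) hY₁Z hind₃,
    hS₁.integral_natCast_poissonMeasure, hS₁.variance_natCast_poissonMeasure]

end ProbabilityTheory

/-- In the common zero-inflation bivariate Poisson model with equal rates and a common shock,
`X₁ = W (Y₁ + Z)`, `X₂ = W (Y₂ + Z)` with `W ~ Bernoulli(1-φ)`, `Y₁, Y₂ ~ Poisson((1-θ)λ)`,
`Z ~ Poisson(θλ)` all mutually independent, one has `corr(X₁,X₂) = (θ + φλ)/(1 + φλ)`, where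
`corr(U,V) = cov(U,V)/√(var(U) var(V))` and `cov(U,V) = E(UV) - E(U)E(V)`.
Mutual independence of `W, Y₁, Y₂, Z` is expressed by the equivalent sequential conditions
`W ⟂ (Y₁, Y₂, Z)`, `Y₁ ⟂ (Y₂, Z)` and `Y₂ ⟂ Z`. -/
theorem stmt_10 {Ω : Type*} [MeasurableSpace Ω] (μ : Measure Ω) [IsProbabilityMeasure μ]
    (φ θ lam : ℝ) (hφ : φ ∈ Set.Ioo (0 : ℝ) 1) (hθ : θ ∈ Set.Ioo (0 : ℝ) 1) (hlam : 0 < lam)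
    (W Y₁ Y₂ Z : Ω → ℕ)
    (hWm : Measurable W) (hY₁m : Measurable Y₁) (hY₂m : Measurable Y₂) (hZm : Measurable Z)
    (hW01 : ∀ ω, W ω = 0 ∨ W ω = 1)
    (hW1 : μ {ω | W ω = 1} = ENNReal.ofReal (1 - φ))
    (hY₁ : ∀ k : ℕ, μ {ω | Y₁ ω = k}
      = ENNReal.ofReal (Real.exp (-((1 - θ) * lam)) * ((1 - θ) * lam) ^ k / Nat.factorial k))
    (hY₂ : ∀ k : ℕ, μ {ω | Y₂ ω = k}
      = ENNReal.ofReal (Real.exp (-((1 - θ) * lam)) * ((1 - θ) * lam) ^ k / Nat.factorial k))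
    (hZ : ∀ k : ℕ, μ {ω | Z ω = k}
      = ENNReal.ofReal (Real.exp (-(θ * lam)) * (θ * lam) ^ k / Nat.factorial k))
    (hind₁ : IndepFun W (fun ω => (Y₁ ω, Y₂ ω, Z ω)) μ)
    (hind₂ : IndepFun Y₁ (fun ω => (Y₂ ω, Z ω)) μ)
    (hind₃ : IndepFun Y₂ Z μ) :
    ((∫ ω, ((W ω * (Y₁ ω + Z ω) : ℕ) : ℝ) * ((W ω * (Y₂ ω + Z ω) : ℕ) : ℝ) ∂μ)
        - (∫ ω, ((W ω * (Y₁ ω + Z ω) : ℕ) : ℝ) ∂μ)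
          * (∫ ω, ((W ω * (Y₂ ω + Z ω) : ℕ) : ℝ) ∂μ))
      / Real.sqrt (variance (fun ω => ((W ω * (Y₁ ω + Z ω) : ℕ) : ℝ)) μ
          * variance (fun ω => ((W ω * (Y₂ ω + Z ω) : ℕ) : ℝ)) μ)
    = (θ + φ * lam) / (1 + φ * lam) := by
  obtain ⟨hφ0, hφ1⟩ := hφ
  obtain ⟨hθ0, hθ1⟩ := hθ
  set r₁ : NNReal := ⟨(1 - θ) * lam, by nlinarith⟩
  set r₀ : NNReal := ⟨θ * lam, by positivity⟩
  have hr₀ : (r₀ : ℝ) = θ * lam := rfl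
  have hr : ((r₁ + r₀ : NNReal) : ℝ) = lam := by change (1 - θ) * lam + θ * lam = lam; ring
  have hWm' : Measurable (fun ω ↦ (W ω : ℝ)) := (measurable_of_countable _).comp hWm
  have hEW : μ[fun ω ↦ (W ω : ℝ)] = 1 - φ := by
    rw [integral_eq_measureReal_of_forall_eq_zero_or_one (by simpa using hW01)
      (hWm' (measurableSet_singleton 1))]
    simp [measureReal_def, hW1, hφ1.le]
  have hcorr := correlation_zeroInflated_commonShock hWm hW01 (by rw [hEW]; linarith)
    (hasLaw_poissonMeasure_of_measure_eq hY₁m r₁ hY₁)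
    (hasLaw_poissonMeasure_of_measure_eq hY₂m r₁ hY₂)
    (hasLaw_poissonMeasure_of_measure_eq hZm r₀ hZ) hind₁ hind₂ hind₃
  rw [hEW, hr, hr₀, sub_sub_cancel] at hcorr
  simp only [Nat.cast_mul]
  change correlation _ _ μ = _
  rw [hcorr, div_eq_div_iff (by positivity) (by positivity)]
  ring
end

section
/- Fix λ₁, λ₂ > 0 and φ ∈ (0,1). For θ ∈ (0,1), let H⁻_θ denote the joint distribution function of the pair (X₁, X₂) = (W·T₁, W·T₂), where W ~ Bernoulli(1 − φ) is independent of (T₁, T₂) = (Y₁ + G_{θλ₁}^{−1}(U), Y₂ + G_{θλ₂}^{−1}(1 − U)), with Y₁ ~ Poisson((1 − θ)λ₁), Y₂ ~ Poisson((1 − θ)λ₂), U ~ Uniform(0,1), and Y₁, Y₂, U mutually independent of each other and of W. If θ < θ′ then for all x₁, x₂ ∈ ℕ, H⁻_{θ′}(x₁, x₂) ≤ H⁻_θ(x₁, x₂); i.e., the model with parameter θ′ is smaller in the positive quadrant dependence ordering than the model with parameter θ. -/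
/-!
Conditioning on `W` gives `H = φ + (1 - φ) P(T₁ ≤ x₁, T₂ ≤ x₂)`, and conditioning further on
`(Y₁, Y₂)` writes `P(T ≤ x)` as a Poisson mixture of `L(G_{θλ₁}(x₁ - j₁), G_{θλ₂}(x₂ - j₂))`, where
`L(a, b) = max 0 (a + b - 1)` is the joint CDF of the counter-monotonic pair `(G⁻¹(U), G⁻¹(1 - U))`.
Passing from `θ' = θ + δ` to `θ` moves Poisson rate `δλᵢ` from the shock into `Yᵢ`. Since
`G_{m+δλ} = Po(δλ) ∗ G_m` and `L(a, ·)` is convex and vanishes at `0`, Jensen's inequality for the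
sub-probability weights of `Po(δλ)` on `{0, …, k}` gives
`L(a, G_{m+δλ}(k)) ≤ ∑_d Po(δλ){d} L(a, G_m(k - d))`; integrating against `Po(ν)` and using
`Po(ν) ∗ Po(δλ) = Po(ν + δλ)` shows that the mixture can only grow, one coordinate at a time.
-/

open MeasureTheory ProbabilityTheory

/-- The Poisson(m) cumulative distribution function, with `poissonCDF m k = 0` for `k < 0`. -/
noncomputable def poissonCDF (m : ℝ) (k : ℤ) : ℝ :=
  if k < 0 then 0
  else ∑ i ∈ Finset.range (k.toNat + 1), Real.exp (-m) * m ^ i / Nat.factorial i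

/-- The Poisson(m) quantile function: `min {k ∈ ℕ : G_m(k) ≥ u}`. -/
noncomputable def poissonQuantile (m : ℝ) (u : ℝ) : ℕ :=
  sInf {k : ℕ | u ≤ poissonCDF m k}

open scoped NNReal
open Finset

lemma poissonMeasure_real_singleton_add (a b : ℝ≥0) (n : ℕ) :
    Po(a + b).real {n} = ∑ p ∈ antidiagonal n, Po(a).real {p.1} * Po(b).real {p.2} := by
  simp only [poissonMeasure_real_singleton, NNReal.coe_add, Real.exp_neg, Real.exp_add,
    (Commute.all (a : ℝ) b).add_pow', nsmul_eq_mul, Finset.mul_sum, Finset.sum_div]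
  refine Finset.sum_congr rfl fun p hp => ?_
  rw [← HasAntidiagonal.mem_antidiagonal.mp hp, Nat.cast_add_choose]
  field_simp

lemma sum_poissonMeasure_mul_sum_poissonMeasure (a b : ℝ≥0) (h : ℕ → ℝ) (x : ℕ) :
    ∑ j ∈ range (x + 1), Po(a).real {j} * ∑ d ∈ range (x - j + 1), Po(b).real {d} * h (x - j - d)
      = ∑ n ∈ range (x + 1), Po(a + b).real {n} * h (x - n) := by
  symm
  calc ∑ n ∈ range (x + 1), Po(a + b).real {n} * h (x - n)
      = ∑ n ∈ range (x + 1), ∑ j ∈ range (n + 1),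
          Po(a).real {j} * Po(b).real {n - j} * h (x - j - (n - j)) := by
        refine sum_congr rfl fun n _ => ?_
        rw [poissonMeasure_real_singleton_add, Nat.sum_antidiagonal_eq_sum_range_succ
          (fun i j => Po(a).real {i} * Po(b).real {j}), sum_mul]
        refine sum_congr rfl fun j hj => ?_
        rw [show x - j - (n - j) = x - n by grind]
    _ = ∑ j ∈ range (x + 1), ∑ d ∈ range (x + 1 - j),
          Po(a).real {j} * Po(b).real {d} * h (x - j - d) :=
        sum_range_diag_flip (x + 1) fun j d => Po(a).real {j} * Po(b).real {d} * h (x - j - d)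
    _ = _ := by
        refine sum_congr rfl fun j hj => ?_
        rw [mul_sum, show x + 1 - j = x - j + 1 by grind]
        simp only [mul_assoc]

noncomputable def poissonCDFNat (r : ℝ≥0) (k : ℕ) : ℝ := Po(r).real (Set.Iic k)

lemma poissonCDFNat_eq_sum (r : ℝ≥0) (k : ℕ) :
    poissonCDFNat r k = ∑ i ∈ range (k + 1), Po(r).real {i} := by
  rw [sum_measureReal_singleton, Nat.range_succ_eq_Iic, coe_Iic, poissonCDFNat]

lemma poissonCDFNat_le_one (r : ℝ≥0) (k : ℕ) : poissonCDFNat r k ≤ 1 := measureReal_le_one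

lemma monotone_poissonCDFNat (r : ℝ≥0) : Monotone (poissonCDFNat r) :=
  fun _ _ h => measureReal_mono (Set.Iic_subset_Iic.2 h)

lemma poissonCDF_natCast (r : ℝ≥0) (k : ℕ) : poissonCDF r k = poissonCDFNat r k := by
  simp [poissonCDF, poissonCDFNat_eq_sum, poissonMeasure_real_singleton]

lemma exists_le_poissonCDFNat (r : ℝ≥0) {u : ℝ} (hu : u < 1) : ∃ k, u ≤ poissonCDFNat r k := by
  have hlim : Filter.Tendsto (fun k : ℕ => Po(r) (Set.Iic k)) Filter.atTop (nhds 1) := by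
    simpa using tendsto_measure_Iic_atTop Po(r)
  obtain ⟨k, hk⟩ := (hlim.eventually_const_lt (ENNReal.ofReal_lt_one.2 hu)).exists
  exact ⟨k, (ENNReal.ofReal_le_iff_le_toReal (measure_ne_top _ _)).1 hk.le⟩

lemma poissonCDFNat_add (a b : ℝ≥0) (x : ℕ) :
    poissonCDFNat (a + b) x = ∑ j ∈ range (x + 1), Po(a).real {j} * poissonCDFNat b (x - j) := by
  simpa [poissonCDFNat_eq_sum] using
    (sum_poissonMeasure_mul_sum_poissonMeasure a b (fun _ => 1) x).symm

lemma Nat.sInf_setOf_le_le_iff {α : Type*} [LinearOrder α] {F : ℕ → α} (hF : Monotone F)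
    (u : α) (n : ℕ) : sInf {k | u ≤ F k} ≤ n ↔ u ≤ F n ∨ ∀ k, F k < u := by
  -- the second alternative is the junk case `sInf ∅ = 0`
  by_cases h : ∃ k, u ≤ F k
  · have hall : ¬ ∀ k, F k < u := fun hlt => h.elim fun k hk => (hlt k).not_ge hk
    simp only [hall, or_false]
    exact ⟨fun hn => le_trans (Nat.sInf_mem h) (hF hn), fun hn => Nat.sInf_le hn⟩
  · have hempty : {k | u ≤ F k} = ∅ := Set.eq_empty_of_forall_notMem fun k hk => h ⟨k, hk⟩
    simp only [not_exists, not_le] at h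
    simp [hempty, h]

lemma poissonQuantile_eq (r : ℝ≥0) (u : ℝ) :
    poissonQuantile r u = sInf {k | u ≤ poissonCDFNat r k} := by
  simp only [poissonQuantile, poissonCDF_natCast]

lemma poissonQuantile_le_iff (r : ℝ≥0) {u : ℝ} (hu : u < 1) (n : ℕ) :
    poissonQuantile r u ≤ n ↔ u ≤ poissonCDFNat r n := by
  rw [poissonQuantile_eq, Nat.sInf_setOf_le_le_iff (monotone_poissonCDFNat r), or_iff_left]
  obtain ⟨k, hk⟩ := exists_le_poissonCDFNat r hu
  exact fun h => (h k).not_ge hk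

lemma measurable_poissonQuantile (r : ℝ≥0) : Measurable (poissonQuantile r) := by
  refine measurable_of_Iic fun n => ?_
  have : poissonQuantile r ⁻¹' Set.Iic n
      = Set.Iic (poissonCDFNat r n) ∪ ⋂ k, Set.Ioi (poissonCDFNat r k) := by
    ext u
    simp [poissonQuantile_eq, Nat.sInf_setOf_le_le_iff (monotone_poissonCDFNat r)]
  rw [this]
  exact measurableSet_Iic.union (.iInter fun _ => measurableSet_Ioi)

/-- The lower Fréchet–Hoeffding bound `W(a, b)`, the joint CDF of the counter-monotonic copula. -/
def frechetLower (a b : ℝ) : ℝ := max 0 (a + b - 1)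

lemma frechetLower_nonneg (a b : ℝ) : 0 ≤ frechetLower a b := le_max_left _ _

lemma frechetLower_comm (a b : ℝ) : frechetLower a b = frechetLower b a := by
  rw [frechetLower, frechetLower, add_comm a]

lemma volume_Ioo_inter_setOf_le_and_one_sub_le {a b : ℝ} (ha : a ≤ 1) (hb : b ≤ 1) :
    volume ({u | u ≤ a ∧ 1 - u ≤ b} ∩ Set.Ioo 0 1) = ENNReal.ofReal (frechetLower a b) := by
  have hsub : Set.Ioo (1 - b) a ⊆ {u | u ≤ a ∧ 1 - u ≤ b} ∩ Set.Ioo 0 1 :=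
    fun u ⟨h₁, h₂⟩ => ⟨⟨h₂.le, by linarith⟩, by linarith, by linarith⟩
  have hsup : {u | u ≤ a ∧ 1 - u ≤ b} ∩ Set.Ioo 0 1 ⊆ Set.Icc (1 - b) a :=
    fun u ⟨⟨h₁, h₂⟩, _⟩ => ⟨by linarith, h₁⟩
  have hlo := measure_mono (μ := volume) hsub
  have hhi := measure_mono (μ := volume) hsup
  rw [Real.volume_Ioo] at hlo
  rw [Real.volume_Icc] at hhi
  rw [frechetLower, ENNReal.ofReal_max, ENNReal.ofReal_zero, max_eq_right zero_le,
    show a + b - 1 = a - (1 - b) by ring]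
  exact le_antisymm hhi hlo

lemma volume_restrict_setOf_poissonQuantile_le_and_le (m₁ m₂ : ℝ≥0) (k₁ k₂ : ℕ) :
    volume.restrict (Set.Ioo 0 1) {u | poissonQuantile m₁ u ≤ k₁ ∧ poissonQuantile m₂ (1 - u) ≤ k₂}
      = ENNReal.ofReal (frechetLower (poissonCDFNat m₁ k₁) (poissonCDFNat m₂ k₂)) := by
  rw [Measure.restrict_apply' measurableSet_Ioo, ← volume_Ioo_inter_setOf_le_and_one_sub_le
    (poissonCDFNat_le_one m₁ k₁) (poissonCDFNat_le_one m₂ k₂)]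
  congr 1
  ext u
  simp only [Set.mem_inter_iff, Set.mem_ofPred_eq, Set.mem_Ioo]
  refine and_congr_left fun hu => ?_
  rw [poissonQuantile_le_iff m₁ hu.2, poissonQuantile_le_iff m₂ (by linarith [hu.1])]

lemma frechetLower_sum_le {ι : Type*} {s : Finset ι} {p b : ι → ℝ} {a : ℝ} (ha : a ≤ 1)
    (hp : ∀ i ∈ s, 0 ≤ p i) (hs : ∑ i ∈ s, p i ≤ 1) :
    frechetLower a (∑ i ∈ s, p i * b i) ≤ ∑ i ∈ s, p i * frechetLower a (b i) := by
  refine max_le (sum_nonneg fun i hi => mul_nonneg (hp i hi) (le_max_left _ _)) ?_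
  have hsplit : ∑ i ∈ s, p i * (a + b i - 1) = (a - 1) * ∑ i ∈ s, p i + ∑ i ∈ s, p i * b i := by
    rw [mul_sum, ← sum_add_distrib]
    exact sum_congr rfl fun i _ => by ring
  calc a + ∑ i ∈ s, p i * b i - 1 ≤ ∑ i ∈ s, p i * (a + b i - 1) := by
        rw [hsplit]; nlinarith
    _ ≤ ∑ i ∈ s, p i * frechetLower a (b i) :=
        sum_le_sum fun i hi => mul_le_mul_of_nonneg_left (le_max_right _ _) (hp i hi)

lemma sum_poissonMeasure_mul_frechetLower_le (ν m δ : ℝ≥0) {a : ℝ} (ha : a ≤ 1) (x : ℕ) :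
    ∑ j ∈ range (x + 1), Po(ν).real {j} * frechetLower a (poissonCDFNat (m + δ) (x - j))
      ≤ ∑ j ∈ range (x + 1), Po(ν + δ).real {j} * frechetLower a (poissonCDFNat m (x - j)) :=
  calc _ ≤ ∑ j ∈ range (x + 1), Po(ν).real {j} * ∑ d ∈ range (x - j + 1),
          Po(δ).real {d} * frechetLower a (poissonCDFNat m (x - j - d)) := by
        refine sum_le_sum fun j _ => mul_le_mul_of_nonneg_left ?_ measureReal_nonneg
        rw [add_comm m, poissonCDFNat_add]
        refine frechetLower_sum_le ha (fun _ _ => measureReal_nonneg) ?_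
        rw [← poissonCDFNat_eq_sum]
        exact poissonCDFNat_le_one δ _
    _ = _ :=
        sum_poissonMeasure_mul_sum_poissonMeasure ν δ
          (fun k => frechetLower a (poissonCDFNat m k)) x

/-- The joint CDF of `(Y₁ + G_{m₁}⁻¹(U), Y₂ + G_{m₂}⁻¹(1 - U))` for `Yᵢ ~ Po(νᵢ)`, written by
conditioning on `(Y₁, Y₂)`. -/
noncomputable def counterShockCDF (ν₁ m₁ ν₂ m₂ : ℝ≥0) (x₁ x₂ : ℕ) : ℝ :=
  ∑ j₁ ∈ range (x₁ + 1), Po(ν₁).real {j₁} * ∑ j₂ ∈ range (x₂ + 1), Po(ν₂).real {j₂} *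
    frechetLower (poissonCDFNat m₁ (x₁ - j₁)) (poissonCDFNat m₂ (x₂ - j₂))

lemma counterShockCDF_comm (ν₁ m₁ ν₂ m₂ : ℝ≥0) (x₁ x₂ : ℕ) :
    counterShockCDF ν₁ m₁ ν₂ m₂ x₁ x₂ = counterShockCDF ν₂ m₂ ν₁ m₁ x₂ x₁ := by
  simp only [counterShockCDF, mul_sum]
  rw [sum_comm]
  refine sum_congr rfl fun j₂ _ => sum_congr rfl fun j₁ _ => ?_
  rw [frechetLower_comm]
  ring

lemma counterShockCDF_add_snd_le (ν₁ m₁ ν₂ m₂ δ : ℝ≥0) (x₁ x₂ : ℕ) :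
    counterShockCDF ν₁ m₁ ν₂ (m₂ + δ) x₁ x₂ ≤ counterShockCDF ν₁ m₁ (ν₂ + δ) m₂ x₁ x₂ :=
  sum_le_sum fun _ _ => mul_le_mul_of_nonneg_left
    (sum_poissonMeasure_mul_frechetLower_le ν₂ m₂ δ (poissonCDFNat_le_one m₁ _) x₂)
    measureReal_nonneg

lemma counterShockCDF_add_le (ν₁ m₁ ν₂ m₂ δ₁ δ₂ : ℝ≥0) (x₁ x₂ : ℕ) :
    counterShockCDF ν₁ (m₁ + δ₁) ν₂ (m₂ + δ₂) x₁ x₂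
      ≤ counterShockCDF (ν₁ + δ₁) m₁ (ν₂ + δ₂) m₂ x₁ x₂ :=
  calc _ ≤ counterShockCDF ν₁ (m₁ + δ₁) (ν₂ + δ₂) m₂ x₁ x₂ := counterShockCDF_add_snd_le ..
    _ = counterShockCDF (ν₂ + δ₂) m₂ ν₁ (m₁ + δ₁) x₂ x₁ := counterShockCDF_comm ..
    _ ≤ counterShockCDF (ν₂ + δ₂) m₂ (ν₁ + δ₁) m₁ x₂ x₁ := counterShockCDF_add_snd_le ..
    _ = _ := counterShockCDF_comm ..

section Model

variable {Ω : Type*} [MeasurableSpace Ω] {μ : Measure Ω}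

lemma measure_setOf_mem_and_mem_eq_sum {α β : Type*} [MeasurableSpace α]
    [MeasurableSingletonClass α] [MeasurableSpace β] {Y : Ω → α} {Z : Ω → β}
    (hY : Measurable Y) (hZ : Measurable Z) (hind : IndepFun Y Z μ) (s : Finset α)
    {B : α → Set β} (hB : ∀ a, MeasurableSet (B a)) :
    μ {ω | Y ω ∈ s ∧ Z ω ∈ B (Y ω)} = ∑ a ∈ s, μ {ω | Y ω = a} * μ (Z ⁻¹' B a) := by
  have hunion : {ω | Y ω ∈ s ∧ Z ω ∈ B (Y ω)} = ⋃ a ∈ s, Y ⁻¹' {a} ∩ Z ⁻¹' B a := by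
    ext ω
    simp
  rw [hunion, measure_biUnion_finset]
  · exact sum_congr rfl fun a _ =>
      hind.measure_inter_preimage_eq_mul _ _ (measurableSet_singleton a) (hB a)
  · exact fun a _ b _ hab => ((Set.disjoint_singleton.2 hab).preimage Y).mono
      Set.inter_subset_left Set.inter_subset_left
  · exact fun a _ => (hY (measurableSet_singleton a)).inter (hZ (hB a))

lemma measure_mul_le_and_mul_le [IsProbabilityMeasure μ] {W T₁ T₂ : Ω → ℕ}
    (hW : Measurable W) (hT₁ : Measurable T₁) (hT₂ : Measurable T₂)
    (hW01 : ∀ ω, W ω = 0 ∨ W ω = 1) (hind : IndepFun W (fun ω => (T₁ ω, T₂ ω)) μ) (x₁ x₂ : ℕ) :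
    μ {ω | W ω * T₁ ω ≤ x₁ ∧ W ω * T₂ ω ≤ x₂}
      = 1 - μ {ω | W ω = 1} + μ {ω | W ω = 1} * μ {ω | T₁ ω ≤ x₁ ∧ T₂ ω ≤ x₂} := by
  set B : Set (ℕ × ℕ) := {p | p.1 ≤ x₁ ∧ p.2 ≤ x₂}
  have hB : MeasurableSet B := (Set.to_countable B).measurableSet
  have hW1 : MeasurableSet (W ⁻¹' {1}) := hW (measurableSet_singleton 1)
  have hevent : {ω | W ω * T₁ ω ≤ x₁ ∧ W ω * T₂ ω ≤ x₂}
      = (W ⁻¹' {1})ᶜ ∪ (W ⁻¹' {1} ∩ (fun ω => (T₁ ω, T₂ ω)) ⁻¹' B) := by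
    ext ω
    rcases hW01 ω with h | h <;> simp [h, B]
  rw [hevent, measure_union (disjoint_compl_left.mono_right Set.inter_subset_left)
    (hW1.inter ((hT₁.prodMk hT₂) hB)), measure_compl hW1 (measure_ne_top _ _), measure_univ,
    hind.measure_inter_preimage_eq_mul _ _ (measurableSet_singleton 1) hB]
  rfl

lemma measure_counterShock_eq {ν₁ m₁ ν₂ m₂ : ℝ≥0} {Y₁ Y₂ : Ω → ℕ} {U : Ω → ℝ}
    (hY₁m : Measurable Y₁) (hY₂m : Measurable Y₂) (hUm : Measurable U)
    (hY₁ : ∀ k : ℕ, μ {ω | Y₁ ω = k} = Po(ν₁) {k}) (hY₂ : ∀ k : ℕ, μ {ω | Y₂ ω = k} = Po(ν₂) {k})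
    (hU : μ.map U = volume.restrict (Set.Ioo 0 1))
    (hind₂ : IndepFun Y₁ (fun ω => (Y₂ ω, U ω)) μ) (hind₃ : IndepFun Y₂ U μ) (x₁ x₂ : ℕ) :
    μ {ω | Y₁ ω + poissonQuantile m₁ (U ω) ≤ x₁ ∧ Y₂ ω + poissonQuantile m₂ (1 - U ω) ≤ x₂}
      = ENNReal.ofReal (counterShockCDF ν₁ m₁ ν₂ m₂ x₁ x₂) := by
  set I : ℕ → ℕ → Set ℝ := fun j₁ j₂ =>
    {u | poissonQuantile m₁ u ≤ x₁ - j₁ ∧ poissonQuantile m₂ (1 - u) ≤ x₂ - j₂}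
  have hQ₁ := measurable_poissonQuantile m₁
  have hQ₂ : Measurable fun u => poissonQuantile m₂ (1 - u) :=
    (measurable_poissonQuantile m₂).comp (measurable_const.sub measurable_id)
  have hI : ∀ j₁ j₂, MeasurableSet (I j₁ j₂) := fun j₁ j₂ =>
    (hQ₁ measurableSet_Iic).inter (hQ₂ measurableSet_Iic)
  set B : ℕ → Set (ℕ × ℝ) := fun j₁ => {p | p.1 ∈ range (x₂ + 1) ∧ p.2 ∈ I j₁ p.1}
  have hB : ∀ j₁, MeasurableSet (B j₁) := fun j₁ =>
    measurableSet_setOfPred.2 <| measurable_from_prod_countable_right fun j₂ =>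
      measurableSet_setOfPred.1 <| (MeasurableSet.const (j₂ ∈ range (x₂ + 1))).inter (hI j₁ j₂)
  have hevent : {ω | Y₁ ω + poissonQuantile m₁ (U ω) ≤ x₁ ∧
      Y₂ ω + poissonQuantile m₂ (1 - U ω) ≤ x₂}
      = {ω | Y₁ ω ∈ range (x₁ + 1) ∧ (Y₂ ω, U ω) ∈ B (Y₁ ω)} := by
    ext ω
    simp only [Set.mem_ofPred_eq, mem_range, B, I]
    omega
  have hUI : ∀ j₁ j₂, μ (U ⁻¹' I j₁ j₂)
      = ENNReal.ofReal (frechetLower (poissonCDFNat m₁ (x₁ - j₁)) (poissonCDFNat m₂ (x₂ - j₂))) :=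
    fun j₁ j₂ => by
      rw [← Measure.map_apply hUm (hI j₁ j₂), hU, volume_restrict_setOf_poissonQuantile_le_and_le]
  rw [hevent, measure_setOf_mem_and_mem_eq_sum hY₁m (hY₂m.prodMk hUm) hind₂ _ hB,
    counterShockCDF, ENNReal.ofReal_sum_of_nonneg fun j₁ _ => mul_nonneg measureReal_nonneg
      (sum_nonneg fun j₂ _ => mul_nonneg measureReal_nonneg (frechetLower_nonneg _ _))]
  refine sum_congr rfl fun j₁ _ => ?_
  have hinner : μ ((fun ω => (Y₂ ω, U ω)) ⁻¹' B j₁)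
      = ∑ j₂ ∈ range (x₂ + 1), μ {ω | Y₂ ω = j₂} * μ (U ⁻¹' I j₁ j₂) :=
    measure_setOf_mem_and_mem_eq_sum hY₂m hUm hind₃ _ (hI j₁)
  rw [hinner, hY₁, ← ofReal_measureReal, ENNReal.ofReal_mul measureReal_nonneg,
    ENNReal.ofReal_sum_of_nonneg fun j₂ _ =>
      mul_nonneg measureReal_nonneg (frechetLower_nonneg _ _)]
  refine congrArg _ (sum_congr rfl fun j₂ _ => ?_)
  rw [hY₂, ← ofReal_measureReal, hUI, ENNReal.ofReal_mul measureReal_nonneg]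

lemma measure_bzipMinus_eq [IsProbabilityMeasure μ] {ν₁ m₁ ν₂ m₂ : ℝ} (hν₁ : 0 ≤ ν₁)
    (hm₁ : 0 ≤ m₁) (hν₂ : 0 ≤ ν₂) (hm₂ : 0 ≤ m₂) {W Y₁ Y₂ : Ω → ℕ} {U : Ω → ℝ}
    (hWm : Measurable W) (hY₁m : Measurable Y₁) (hY₂m : Measurable Y₂) (hUm : Measurable U)
    (hW01 : ∀ ω, W ω = 0 ∨ W ω = 1)
    (hY₁ : ∀ k : ℕ, μ {ω | Y₁ ω = k} = ENNReal.ofReal (Real.exp (-ν₁) * ν₁ ^ k / Nat.factorial k))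
    (hY₂ : ∀ k : ℕ, μ {ω | Y₂ ω = k} = ENNReal.ofReal (Real.exp (-ν₂) * ν₂ ^ k / Nat.factorial k))
    (hU : μ.map U = volume.restrict (Set.Ioo 0 1))
    (hind₁ : IndepFun W (fun ω => (Y₁ ω, Y₂ ω, U ω)) μ)
    (hind₂ : IndepFun Y₁ (fun ω => (Y₂ ω, U ω)) μ) (hind₃ : IndepFun Y₂ U μ) (x₁ x₂ : ℕ) :
    μ {ω | W ω * (Y₁ ω + poissonQuantile m₁ (U ω)) ≤ x₁ ∧
        W ω * (Y₂ ω + poissonQuantile m₂ (1 - U ω)) ≤ x₂}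
      = 1 - μ {ω | W ω = 1} + μ {ω | W ω = 1} * ENNReal.ofReal
          (counterShockCDF ν₁.toNNReal m₁.toNNReal ν₂.toNNReal m₂.toNNReal x₁ x₂) := by
  lift ν₁ to ℝ≥0 using hν₁
  lift m₁ to ℝ≥0 using hm₁
  lift ν₂ to ℝ≥0 using hν₂
  lift m₂ to ℝ≥0 using hm₂
  have hQ₁ := measurable_poissonQuantile m₁
  have hQ₂ := measurable_poissonQuantile m₂
  have hT : Measurable fun p : ℕ × ℕ × ℝ =>
      (p.1 + poissonQuantile m₁ p.2.2, p.2.1 + poissonQuantile m₂ (1 - p.2.2)) := by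
    fun_prop
  rw [measure_mul_le_and_mul_le hWm (by fun_prop) (by fun_prop) hW01 (hind₁.comp measurable_id hT),
    measure_counterShock_eq hY₁m hY₂m hUm (fun k => by rw [hY₁, poissonMeasure_singleton])
      (fun k => by rw [hY₂, poissonMeasure_singleton]) hU hind₂ hind₃]
  simp only [Real.toNNReal_coe]

end Model

lemma counterShockCDF_toNNReal_le_of_le {lam₁ lam₂ θ θ' : ℝ} (hlam₁ : 0 ≤ lam₁)
    (hlam₂ : 0 ≤ lam₂) (hθ : 0 ≤ θ) (hθθ' : θ ≤ θ') (hθ' : θ' ≤ 1) (x₁ x₂ : ℕ) :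
    counterShockCDF ((1 - θ') * lam₁).toNNReal (θ' * lam₁).toNNReal
        ((1 - θ') * lam₂).toNNReal (θ' * lam₂).toNNReal x₁ x₂
      ≤ counterShockCDF ((1 - θ) * lam₁).toNNReal (θ * lam₁).toNNReal
        ((1 - θ) * lam₂).toNNReal (θ * lam₂).toNNReal x₁ x₂ := by
  obtain ⟨δ, hδ, rfl⟩ : ∃ δ, 0 ≤ δ ∧ θ' = θ + δ := ⟨θ' - θ, by linarith, by ring⟩
  have hθδ : 0 ≤ 1 - (θ + δ) := by linarith
  rw [show 1 - θ = 1 - (θ + δ) + δ by ring]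
  simp only [add_mul]
  rw [Real.toNNReal_add (mul_nonneg hθ hlam₁) (mul_nonneg hδ hlam₁),
    Real.toNNReal_add (mul_nonneg hθ hlam₂) (mul_nonneg hδ hlam₂),
    Real.toNNReal_add (mul_nonneg hθδ hlam₁) (mul_nonneg hδ hlam₁),
    Real.toNNReal_add (mul_nonneg hθδ hlam₂) (mul_nonneg hδ hlam₂)]
  exact counterShockCDF_add_le ..

/-- Mutual independence of `W, Y₁, Y₂, U` is encoded by the sequential conditions
`W ⟂ (Y₁, Y₂, U)`, `Y₁ ⟂ (Y₂, U)`, `Y₂ ⟂ U`. -/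
theorem stmt_16_general {Ω Ω' : Type*} [MeasurableSpace Ω] [MeasurableSpace Ω']
    (μ : Measure Ω) (μ' : Measure Ω') [IsProbabilityMeasure μ] [IsProbabilityMeasure μ']
    (lam₁ lam₂ φ θ θ' : ℝ) (hlam₁ : 0 < lam₁) (hlam₂ : 0 < lam₂)
    (hθ : θ ∈ Set.Ioo (0 : ℝ) 1) (hθ' : θ' ∈ Set.Ioo (0 : ℝ) 1)
    (hlt : θ < θ')
    (W : Ω → ℕ) (Y₁ Y₂ : Ω → ℕ) (U : Ω → ℝ)
    (hWm : Measurable W) (hY₁m : Measurable Y₁) (hY₂m : Measurable Y₂) (hUm : Measurable U)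
    (hW01 : ∀ ω, W ω = 0 ∨ W ω = 1)
    (hW1 : μ {ω | W ω = 1} = ENNReal.ofReal (1 - φ))
    (hY₁ : ∀ k : ℕ, μ {ω | Y₁ ω = k}
      = ENNReal.ofReal (Real.exp (-((1 - θ) * lam₁)) * ((1 - θ) * lam₁) ^ k / Nat.factorial k))
    (hY₂ : ∀ k : ℕ, μ {ω | Y₂ ω = k}
      = ENNReal.ofReal (Real.exp (-((1 - θ) * lam₂)) * ((1 - θ) * lam₂) ^ k / Nat.factorial k))
    (hU : Measure.map U μ = volume.restrict (Set.Ioo (0 : ℝ) 1))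
    (hind₁ : IndepFun W (fun ω => (Y₁ ω, Y₂ ω, U ω)) μ)
    (hind₂ : IndepFun Y₁ (fun ω => (Y₂ ω, U ω)) μ)
    (hind₃ : IndepFun Y₂ U μ)
    (W' : Ω' → ℕ) (Y₁' Y₂' : Ω' → ℕ) (U' : Ω' → ℝ)
    (hWm' : Measurable W') (hY₁m' : Measurable Y₁') (hY₂m' : Measurable Y₂')
    (hUm' : Measurable U')
    (hW01' : ∀ ω, W' ω = 0 ∨ W' ω = 1)
    (hW1' : μ' {ω | W' ω = 1} = ENNReal.ofReal (1 - φ))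
    (hY₁' : ∀ k : ℕ, μ' {ω | Y₁' ω = k}
      = ENNReal.ofReal (Real.exp (-((1 - θ') * lam₁)) * ((1 - θ') * lam₁) ^ k / Nat.factorial k))
    (hY₂' : ∀ k : ℕ, μ' {ω | Y₂' ω = k}
      = ENNReal.ofReal (Real.exp (-((1 - θ') * lam₂)) * ((1 - θ') * lam₂) ^ k / Nat.factorial k))
    (hU' : Measure.map U' μ' = volume.restrict (Set.Ioo (0 : ℝ) 1))
    (hind₁' : IndepFun W' (fun ω => (Y₁' ω, Y₂' ω, U' ω)) μ')
    (hind₂' : IndepFun Y₁' (fun ω => (Y₂' ω, U' ω)) μ')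
    (hind₃' : IndepFun Y₂' U' μ') :
    ∀ x₁ x₂ : ℕ,
      μ' {ω | W' ω * (Y₁' ω + poissonQuantile (θ' * lam₁) (U' ω)) ≤ x₁ ∧
              W' ω * (Y₂' ω + poissonQuantile (θ' * lam₂) (1 - U' ω)) ≤ x₂}
      ≤ μ {ω | W ω * (Y₁ ω + poissonQuantile (θ * lam₁) (U ω)) ≤ x₁ ∧
               W ω * (Y₂ ω + poissonQuantile (θ * lam₂) (1 - U ω)) ≤ x₂} := by
  intro x₁ x₂
  have hrates : ∀ {t : ℝ}, t ∈ Set.Ioo (0 : ℝ) 1 →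
      0 ≤ (1 - t) * lam₁ ∧ 0 ≤ t * lam₁ ∧ 0 ≤ (1 - t) * lam₂ ∧ 0 ≤ t * lam₂ :=
    fun ht => ⟨by nlinarith [ht.2], by nlinarith [ht.1], by nlinarith [ht.2], by nlinarith [ht.1]⟩
  obtain ⟨hν₁, hm₁, hν₂, hm₂⟩ := hrates hθ
  obtain ⟨hν₁', hm₁', hν₂', hm₂'⟩ := hrates hθ'
  rw [measure_bzipMinus_eq hν₁' hm₁' hν₂' hm₂' hWm' hY₁m' hY₂m' hUm' hW01' hY₁' hY₂' hU' hind₁'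
      hind₂' hind₃',
    measure_bzipMinus_eq hν₁ hm₁ hν₂ hm₂ hWm hY₁m hY₂m hUm hW01 hY₁ hY₂ hU hind₁ hind₂ hind₃,
    hW1, hW1']
  gcongr
  exact counterShockCDF_toNNReal_le_of_le hlam₁.le hlam₂.le hθ.1.le hlt.le hθ'.2.le x₁ x₂

/-- PQD ordering in `θ` for the counter-monotonic-shock bivariate zero-inflated Poisson model
`BZIP⁻(λ₁, λ₂, θ, φ)`: if `θ < θ'` then the joint CDF at parameter `θ'` is pointwise at most
the joint CDF at parameter `θ`. Each model is `(X₁, X₂) = (W T₁, W T₂)` with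
`(T₁, T₂) = (Y₁ + G_{θλ₁}⁻¹(U), Y₂ + G_{θλ₂}⁻¹(1 − U))`, where `W ~ Bernoulli(1-φ)`,
`Y₁ ~ Poisson((1-θ)λ₁)`, `Y₂ ~ Poisson((1-θ)λ₂)`, `U ~ Uniform(0,1)`, all mutually
independent (expressed by the equivalent sequential conditions `W ⟂ (Y₁, Y₂, U)`,
`Y₁ ⟂ (Y₂, U)`, `Y₂ ⟂ U`). -/
theorem stmt_16 {Ω Ω' : Type*} [MeasurableSpace Ω] [MeasurableSpace Ω']
    (μ : Measure Ω) (μ' : Measure Ω') [IsProbabilityMeasure μ] [IsProbabilityMeasure μ']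
    (lam₁ lam₂ φ θ θ' : ℝ) (hlam₁ : 0 < lam₁) (hlam₂ : 0 < lam₂)
    (hφ : φ ∈ Set.Ioo (0 : ℝ) 1) (hθ : θ ∈ Set.Ioo (0 : ℝ) 1) (hθ' : θ' ∈ Set.Ioo (0 : ℝ) 1)
    (hlt : θ < θ')
    (W : Ω → ℕ) (Y₁ Y₂ : Ω → ℕ) (U : Ω → ℝ)
    (hWm : Measurable W) (hY₁m : Measurable Y₁) (hY₂m : Measurable Y₂) (hUm : Measurable U)
    (hW01 : ∀ ω, W ω = 0 ∨ W ω = 1)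
    (hW1 : μ {ω | W ω = 1} = ENNReal.ofReal (1 - φ))
    (hY₁ : ∀ k : ℕ, μ {ω | Y₁ ω = k}
      = ENNReal.ofReal (Real.exp (-((1 - θ) * lam₁)) * ((1 - θ) * lam₁) ^ k / Nat.factorial k))
    (hY₂ : ∀ k : ℕ, μ {ω | Y₂ ω = k}
      = ENNReal.ofReal (Real.exp (-((1 - θ) * lam₂)) * ((1 - θ) * lam₂) ^ k / Nat.factorial k))
    (hU : Measure.map U μ = volume.restrict (Set.Ioo (0 : ℝ) 1))
    (hind₁ : IndepFun W (fun ω => (Y₁ ω, Y₂ ω, U ω)) μ)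
    (hind₂ : IndepFun Y₁ (fun ω => (Y₂ ω, U ω)) μ)
    (hind₃ : IndepFun Y₂ U μ)
    (W' : Ω' → ℕ) (Y₁' Y₂' : Ω' → ℕ) (U' : Ω' → ℝ)
    (hWm' : Measurable W') (hY₁m' : Measurable Y₁') (hY₂m' : Measurable Y₂')
    (hUm' : Measurable U')
    (hW01' : ∀ ω, W' ω = 0 ∨ W' ω = 1)
    (hW1' : μ' {ω | W' ω = 1} = ENNReal.ofReal (1 - φ))
    (hY₁' : ∀ k : ℕ, μ' {ω | Y₁' ω = k}
      = ENNReal.ofReal (Real.exp (-((1 - θ') * lam₁)) * ((1 - θ') * lam₁) ^ k / Nat.factorial k))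
    (hY₂' : ∀ k : ℕ, μ' {ω | Y₂' ω = k}
      = ENNReal.ofReal (Real.exp (-((1 - θ') * lam₂)) * ((1 - θ') * lam₂) ^ k / Nat.factorial k))
    (hU' : Measure.map U' μ' = volume.restrict (Set.Ioo (0 : ℝ) 1))
    (hind₁' : IndepFun W' (fun ω => (Y₁' ω, Y₂' ω, U' ω)) μ')
    (hind₂' : IndepFun Y₁' (fun ω => (Y₂' ω, U' ω)) μ')
    (hind₃' : IndepFun Y₂' U' μ') :
    ∀ x₁ x₂ : ℕ,
      μ' {ω | W' ω * (Y₁' ω + poissonQuantile (θ' * lam₁) (U' ω)) ≤ x₁ ∧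
              W' ω * (Y₂' ω + poissonQuantile (θ' * lam₂) (1 - U' ω)) ≤ x₂}
      ≤ μ {ω | W ω * (Y₁ ω + poissonQuantile (θ * lam₁) (U ω)) ≤ x₁ ∧
               W ω * (Y₂ ω + poissonQuantile (θ * lam₂) (1 - U ω)) ≤ x₂} :=
  stmt_16_general μ μ' lam₁ lam₂ φ θ θ' hlam₁ hlam₂ hθ hθ' hlt W Y₁ Y₂ U hWm hY₁m hY₂m hUm hW01 hW1
    hY₁ hY₂ hU hind₁ hind₂ hind₃ W' Y₁' Y₂' U' hWm' hY₁m' hY₂m' hUm' hW01' hW1' hY₁' hY₂' hU' hind₁'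
    hind₂' hind₃'
end

section
/- Let λ₁, λ₂ > 0 and φ ∈ (0,1). Let W ~ Bernoulli(1 − φ) be independent of the comonotonic pair (T₁, T₂) = (G_{λ₁}^{−1}(U), G_{λ₂}^{−1}(U)) with U ~ Uniform(0,1), and set (X₁, X₂) = (W·T₁, W·T₂). Then for all x₁, x₂ ∈ ℕ, P(X₁ ≤ x₁, X₂ ≤ x₂) = φ + (1 − φ) min{G_{λ₁}(x₁), G_{λ₂}(x₂)} = min{P(X₁ ≤ x₁), P(X₂ ≤ x₂)}; that is, at full shock strength the bivariate zero-inflated Poisson model attains the Fréchet–Hoeffding upper bound for zero-inflated Poisson margins with common inflation rate φ. -/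
/-!
On `{W = 1}` both coordinates are quantile transforms of the same uniform `U`, so by the
Galois connection `G⁻¹(u) ≤ x ↔ u ≤ G(x)` the joint event `{X₁ ≤ x₁, X₂ ≤ x₂}` is, up to the
null event `{U ≥ 1}`, the event `{W = 0} ∪ {U ≤ min (G_{λ₁}(x₁)) (G_{λ₂}(x₂))}`.
Independence of `W` and `U` gives it probability `φ + (1 - φ) min (G_{λ₁}(x₁)) (G_{λ₂}(x₂))`,
and since `t ↦ φ + (1 - φ) t` is monotone this is the minimum of the two marginal
probabilities.
-/

open MeasureTheory ProbabilityTheory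

open Set Filter

lemma poissonCDF_natCast_s17 (m : ℝ) (x : ℕ) :
    poissonCDF m x = ∑ i ∈ Finset.range (x + 1), Real.exp (-m) * m ^ i / i.factorial := by
  simp [poissonCDF]

section PoissonCDF

variable {m : ℝ}

lemma hasSum_poisson_pmf (hm : 0 ≤ m) :
    HasSum (fun i : ℕ => Real.exp (-m) * m ^ i / i.factorial) 1 :=
  hasSum_one_poissonMeasure ⟨m, hm⟩

lemma poisson_pmf_nonneg (hm : 0 ≤ m) (i : ℕ) : 0 ≤ Real.exp (-m) * m ^ i / i.factorial := by
  positivity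

lemma poissonCDF_nonneg (hm : 0 ≤ m) (x : ℕ) : 0 ≤ poissonCDF m x := by
  rw [poissonCDF_natCast_s17]
  exact Finset.sum_nonneg fun i _ => poisson_pmf_nonneg hm i

lemma poissonCDF_le_one (hm : 0 ≤ m) (x : ℕ) : poissonCDF m x ≤ 1 := by
  rw [poissonCDF_natCast_s17]
  exact sum_le_hasSum _ (fun i _ => poisson_pmf_nonneg hm i) (hasSum_poisson_pmf hm)

lemma poissonCDF_monotone (hm : 0 ≤ m) : Monotone fun x : ℕ => poissonCDF m x := by
  intro x y hxy
  simp only [poissonCDF_natCast_s17]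
  exact Finset.sum_le_sum_of_subset_of_nonneg (Finset.range_subset_range.2 (by omega))
    fun i _ _ => poisson_pmf_nonneg hm i

lemma tendsto_poissonCDF (hm : 0 ≤ m) :
    Tendsto (fun x : ℕ => poissonCDF m x) atTop (nhds 1) := by
  simp only [poissonCDF_natCast_s17]
  exact (hasSum_poisson_pmf hm).tendsto_sum_nat.comp (tendsto_add_atTop_nat 1)

lemma poissonQuantile_le_iff_s17 (hm : 0 ≤ m) {u : ℝ} (hu : u < 1) (x : ℕ) :
    poissonQuantile m u ≤ x ↔ u ≤ poissonCDF m x := by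
  have hne : {k : ℕ | u ≤ poissonCDF m k}.Nonempty :=
    (((tendsto_poissonCDF hm).eventually (eventually_gt_nhds hu)).mono fun _ h => h.le).exists
  exact ⟨fun h => (Nat.sInf_mem hne).trans (poissonCDF_monotone hm h), fun h => Nat.sInf_le h⟩

lemma mul_poissonQuantile_le_iff (hm : 0 ≤ m) {u : ℝ} (hu : u < 1) {w : ℕ}
    (hw : w = 0 ∨ w = 1) (x : ℕ) :
    w * poissonQuantile m u ≤ x ↔ w = 0 ∨ u ≤ poissonCDF m x := by
  rcases hw with rfl | rfl <;> simp [poissonQuantile_le_iff_s17 hm hu x]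

end PoissonCDF

lemma setOf_eq_zero_or_le_inter {Ω : Type*} {W : Ω → ℕ} {U : Ω → ℝ} (s t : ℝ) :
    {ω | W ω = 0 ∨ U ω ≤ s} ∩ {ω | W ω = 0 ∨ U ω ≤ t} = {ω | W ω = 0 ∨ U ω ≤ min s t} := by
  ext ω
  simp only [mem_inter_iff, mem_ofPred_eq, le_min_iff, or_and_left]

section ZeroInflated

variable {Ω : Type*} [MeasurableSpace Ω] {μ : Measure Ω} {W : Ω → ℕ} {U : Ω → ℝ}

lemma ae_lt_one_of_map_eq_uniform (hUm : Measurable U)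
    (hU : μ.map U = volume.restrict (Ioo (0 : ℝ) 1)) : ∀ᵐ ω ∂μ, U ω < 1 := by
  have h : ∀ᵐ u ∂μ.map U, u < 1 := by
    rw [hU]
    exact (ae_restrict_mem measurableSet_Ioo).mono fun _ hu => hu.2
  exact ae_of_ae_map hUm.aemeasurable h

lemma measure_preimage_Iic_of_map_eq_uniform (hUm : Measurable U)
    (hU : μ.map U = volume.restrict (Ioo (0 : ℝ) 1)) {t : ℝ} (ht1 : t ≤ 1) :
    μ (U ⁻¹' Iic t) = ENNReal.ofReal t := by
  rw [← Measure.map_apply hUm measurableSet_Iic, hU, Measure.restrict_apply measurableSet_Iic]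
  refine le_antisymm ?_ ?_
  · calc volume (Iic t ∩ Ioo 0 1) ≤ volume (Ioc 0 t) :=
          measure_mono fun u hu => ⟨hu.2.1, hu.1⟩
      _ = ENNReal.ofReal t := by rw [Real.volume_Ioc, sub_zero]
  · calc ENNReal.ofReal t = volume (Ioo 0 t) := by rw [Real.volume_Ioo, sub_zero]
      _ ≤ volume (Iic t ∩ Ioo 0 1) :=
          measure_mono fun u hu => ⟨hu.2.le, hu.1, hu.2.trans_le ht1⟩

lemma measure_eq_zero_or_le (hWm : Measurable W) (hind : IndepFun W U μ) (t : ℝ) :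
    μ {ω | W ω = 0 ∨ U ω ≤ t} = μ {ω | W ω = 0} + μ {ω | W ω ≠ 0} * μ (U ⁻¹' Iic t) := by
  have hunion : {ω | W ω = 0 ∨ U ω ≤ t} = {ω | W ω = 0} ∪ (W ⁻¹' {0}ᶜ ∩ U ⁻¹' Iic t) := by
    ext ω
    by_cases h : W ω = 0 <;> simp [h]
  have hdisj : Disjoint {ω | W ω = 0} (W ⁻¹' {0}ᶜ ∩ U ⁻¹' Iic t) :=
    disjoint_left.2 fun _ h0 h1 => h1.1 h0
  rw [hunion, measure_union' hdisj (hWm (measurableSet_singleton 0)),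
    hind.measure_inter_preimage_eq_mul _ _ (measurableSet_singleton 0).compl measurableSet_Iic]
  rfl

lemma measure_eq_zero_or_le_of_bernoulli [IsProbabilityMeasure μ] {φ : ℝ} (hφ0 : 0 ≤ φ)
    (hφ1 : φ ≤ 1) (hWm : Measurable W) (hUm : Measurable U) (hW01 : ∀ ω, W ω = 0 ∨ W ω = 1)
    (hW1 : μ {ω | W ω = 1} = ENNReal.ofReal (1 - φ))
    (hU : μ.map U = volume.restrict (Ioo (0 : ℝ) 1)) (hind : IndepFun W U μ)
    {t : ℝ} (ht0 : 0 ≤ t) (ht1 : t ≤ 1) :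
    μ {ω | W ω = 0 ∨ U ω ≤ t} = ENNReal.ofReal (φ + (1 - φ) * t) := by
  have hne : {ω | W ω ≠ 0} = {ω | W ω = 1} := by
    ext ω
    have := hW01 ω
    simp only [mem_ofPred_eq]
    omega
  have h0 : μ {ω | W ω = 0} = ENNReal.ofReal φ := by
    have hcompl : {ω | W ω = 0} = {ω | W ω = 1}ᶜ := by rw [← hne]; ext; simp
    rw [hcompl, prob_compl_eq_one_sub (s := {ω | W ω = 1}) (hWm (measurableSet_singleton 1)), hW1,
      ← ENNReal.ofReal_one, ← ENNReal.ofReal_sub _ (sub_nonneg.2 hφ1), sub_sub_cancel]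
  rw [measure_eq_zero_or_le hWm hind, h0, hne, hW1,
    measure_preimage_Iic_of_map_eq_uniform hUm hU ht1,
    ← ENNReal.ofReal_mul (sub_nonneg.2 hφ1), ← ENNReal.ofReal_add hφ0 (by nlinarith)]

lemma setOf_mul_poissonQuantile_le_ae_eq {m : ℝ} (hm : 0 ≤ m) (hW01 : ∀ ω, W ω = 0 ∨ W ω = 1)
    (hU1 : ∀ᵐ ω ∂μ, U ω < 1) (x : ℕ) :
    {ω | W ω * poissonQuantile m (U ω) ≤ x} =ᵐ[μ] {ω | W ω = 0 ∨ U ω ≤ poissonCDF m x} :=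
  eventuallyEq_set.2 <| hU1.mono fun ω hω => mul_poissonQuantile_le_iff hm hω (hW01 ω) x

end ZeroInflated

/-- At full comonotonic shock strength (`θ = 1`), the bivariate zero-inflated Poisson model
`(X₁, X₂) = (W G_{λ₁}⁻¹(U), W G_{λ₂}⁻¹(U))`, with `W ~ Bernoulli(1-φ)` independent of
`U ~ Uniform(0,1)`, has joint CDF
`P(X₁ ≤ x₁, X₂ ≤ x₂) = φ + (1-φ) min{G_{λ₁}(x₁), G_{λ₂}(x₂)} = min{P(X₁ ≤ x₁), P(X₂ ≤ x₂)}`,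
the Fréchet–Hoeffding upper bound for zero-inflated Poisson margins with common inflation
rate `φ`. -/
theorem stmt_17 {Ω : Type*} [MeasurableSpace Ω] (μ : Measure Ω) [IsProbabilityMeasure μ]
    (lam₁ lam₂ φ : ℝ) (hlam₁ : 0 < lam₁) (hlam₂ : 0 < lam₂) (hφ : φ ∈ Set.Ioo (0 : ℝ) 1)
    (W : Ω → ℕ) (U : Ω → ℝ) (hWm : Measurable W) (hUm : Measurable U)
    (hW01 : ∀ ω, W ω = 0 ∨ W ω = 1)
    (hW1 : μ {ω | W ω = 1} = ENNReal.ofReal (1 - φ))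
    (hU : Measure.map U μ = volume.restrict (Set.Ioo (0 : ℝ) 1))
    (hind : IndepFun W U μ) :
    ∀ x₁ x₂ : ℕ,
      μ {ω | W ω * poissonQuantile lam₁ (U ω) ≤ x₁ ∧ W ω * poissonQuantile lam₂ (U ω) ≤ x₂}
        = ENNReal.ofReal (φ + (1 - φ) * min (poissonCDF lam₁ x₁) (poissonCDF lam₂ x₂)) ∧
      μ {ω | W ω * poissonQuantile lam₁ (U ω) ≤ x₁ ∧ W ω * poissonQuantile lam₂ (U ω) ≤ x₂}
        = min (μ {ω | W ω * poissonQuantile lam₁ (U ω) ≤ x₁})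
            (μ {ω | W ω * poissonQuantile lam₂ (U ω) ≤ x₂}) := by
  intro x₁ x₂
  obtain ⟨hφ0, hφ1⟩ := hφ
  have hU1 := ae_lt_one_of_map_eq_uniform hUm hU
  have hprob {t : ℝ} (ht0 : 0 ≤ t) (ht1 : t ≤ 1) :=
    measure_eq_zero_or_le_of_bernoulli hφ0.le hφ1.le hWm hUm hW01 hW1 hU hind ht0 ht1
  have hevent {m : ℝ} (hm : 0 < m) (x : ℕ) :=
    setOf_mul_poissonQuantile_le_ae_eq (μ := μ) hm.le hW01 hU1 x
  have hmarg {m : ℝ} (hm : 0 < m) (x : ℕ) :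
      μ {ω | W ω * poissonQuantile m (U ω) ≤ x}
        = ENNReal.ofReal (φ + (1 - φ) * poissonCDF m x) := by
    rw [measure_congr (hevent hm x),
      hprob (poissonCDF_nonneg hm.le x) (poissonCDF_le_one hm.le x)]
  have hjoint : μ {ω | W ω * poissonQuantile lam₁ (U ω) ≤ x₁ ∧
      W ω * poissonQuantile lam₂ (U ω) ≤ x₂}
        = ENNReal.ofReal (φ + (1 - φ) * min (poissonCDF lam₁ x₁) (poissonCDF lam₂ x₂)) := by
    rw [ofPred_and, measure_congr ((hevent hlam₁ x₁).inter (hevent hlam₂ x₂)),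
      setOf_eq_zero_or_le_inter,
      hprob (le_min (poissonCDF_nonneg hlam₁.le x₁) (poissonCDF_nonneg hlam₂.le x₂))
        (min_le_of_left_le (poissonCDF_le_one hlam₁.le x₁))]
  refine ⟨hjoint, ?_⟩
  rw [hjoint, hmarg hlam₁, hmarg hlam₂, ← ENNReal.ofReal_min,
    mul_min_of_nonneg _ _ (sub_nonneg.2 hφ1.le), min_add_add_left]
end
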